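/- The binomial transform of the Motzkin numbers gives the shifted Catalan numbers: for all n ≥ 0, Σ_{i=0}^{n} C(n,i)·M_i = C_{n+1}, where M_i is the i-th Motzkin number and C_{n+1} the (n+1)-st Catalan number. -/
import Mathlib

open Finset PowerSeries

/-- The validity condition for a single step `(s, c)` (vertical displacement `s`, color `c`)
of an `(α,β)`-colored order-`ℓ` Motzkin path, where `h` is the height at which the step ends.
Up steps `s = 1` and maximal down steps `D_ℓ` are uncolored (color `0`); a down step
`D_d = (1,-d)` with `d < ℓ` gets one of `α d` colors if it ends at height `0` and one of
`β d` colors if it ends at positive height. -/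
def MotzkinStepOK (ℓ : ℕ) (α β : ℕ → ℕ) (s : ℤ) (c : ℕ) (h : ℤ) : Prop :=
  (s = 1 ∧ c = 0) ∨
  ∃ d : ℕ, d ≤ ℓ ∧ s = -(d : ℤ) ∧
    (if d = ℓ then c = 0 else c < (if h = 0 then α d else β d))

/-- The set of `(α,β)`-colored order-`ℓ` Motzkin paths of length `n` and height `m`,
encoded as lists of (displacement, color) pairs.  The path stays weakly above `y = 0`. -/
def ColoredMotzkinSet (ℓ : ℕ) (α β : ℕ → ℕ) (n m : ℕ) : Set (List (ℤ × ℕ)) :=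
  {L | L.length = n ∧ (L.map Prod.fst).sum = (m : ℤ) ∧
    ∀ i < n, 0 ≤ ((L.take (i + 1)).map Prod.fst).sum ∧
      MotzkinStepOK ℓ α β (L.getD i (0, 0)).1 (L.getD i (0, 0)).2
        (((L.take (i + 1)).map Prod.fst).sum)}

/-- `M ℓ α β n m` is the number of `(α,β)`-colored order-`ℓ` Motzkin paths of
length `n` and height `m`. -/
noncomputable def M (ℓ : ℕ) (α β : ℕ → ℕ) (n m : ℕ) : ℕ :=
  Nat.card (ColoredMotzkinSet ℓ α β n m)

lemma stepOK_iff (s : ℤ) (c : ℕ) (h : ℤ) :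
    MotzkinStepOK 1 (fun _ => 1) (fun _ => 1) s c h ↔
      c = 0 ∧ (s = 1 ∨ s = 0 ∨ s = -1) := by
  constructor
  · rintro (⟨hs, hc⟩ | ⟨d, hd, hs, hc⟩)
    · exact ⟨hc, Or.inl hs⟩
    · interval_cases d
      · rw [ite_self] at hc
        norm_num at hc hs
        exact ⟨(by omega : c = 0), Or.inr (Or.inl hs)⟩
      · simp only [if_pos rfl] at hc
        exact ⟨hc, Or.inr (Or.inr (by exact_mod_cast hs))⟩
  · rintro ⟨rfl, (rfl | rfl | rfl)⟩
    · exact Or.inl ⟨rfl, rfl⟩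
    · exact Or.inr ⟨0, by norm_num⟩
    · exact Or.inr ⟨1, by norm_num⟩

abbrev S1 (n m : ℕ) : Set (List (ℤ × ℕ)) := ColoredMotzkinSet 1 (fun _ => 1) (fun _ => 1) n m

lemma mem_S1_succ {n m : ℕ} {L : List (ℤ × ℕ)} :
    L ∈ S1 (n + 1) m ↔
      ∃ (L' : List (ℤ × ℕ)) (s : ℤ) (m' : ℕ),
        L = L' ++ [(s, 0)] ∧ (s = 1 ∨ s = 0 ∨ s = -1) ∧ (m' : ℤ) + s = m ∧
          L' ∈ S1 n m' := by
  constructor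
  · rintro ⟨hlen, hsum, hcond⟩
    obtain ⟨L', a, rfl⟩ : ∃ L' a, L = L' ++ [a] := by
      rcases List.eq_nil_or_concat L with rfl | ⟨L', a, rfl⟩
      · simp at hlen
      · exact ⟨L', a, by simp⟩
    have hL'len : L'.length = n := by simpa using hlen
    have hsum' : ((L' ++ [a]).map Prod.fst).sum = (L'.map Prod.fst).sum + a.1 := by
      simp
    -- last step conditions
    have hn : n < n + 1 := Nat.lt_succ_self n
    obtain ⟨-, hstep⟩ := hcond n hn
    rw [show (L' ++ [a]).getD n (0,0) = a by
        rw [List.getD_append_right _ _ _ _ (by omega), hL'len]; simp,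
      stepOK_iff] at hstep
    obtain ⟨hc, hs⟩ := hstep
    -- prefix sums nonneg, in particular total of L'
    have hpre : ∀ i, i < n → ((L' ++ [a]).take (i+1)) = L'.take (i+1) := by
      intro i hi
      exact List.take_append_of_le_length (by omega)
    have hL'sum_nonneg : 0 ≤ (L'.map Prod.fst).sum := by
      rcases Nat.eq_zero_or_pos n with rfl | hpos
      · rw [List.length_eq_zero_iff.mp hL'len]; simp
      · obtain ⟨h0, -⟩ := hcond (n - 1) (by omega)
        rw [hpre _ (by omega), show n - 1 + 1 = n by omega, ← hL'len,
          List.take_length] at h0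
        exact h0
    refine ⟨L', a.1, (L'.map Prod.fst).sum.toNat, ?_, hs, ?_, ?_, ?_, ?_⟩
    · rw [← hc]
    · rw [Int.toNat_of_nonneg hL'sum_nonneg]
      rw [hsum'] at hsum; linarith
    · exact hL'len
    · exact (Int.toNat_of_nonneg hL'sum_nonneg).symm ▸ rfl
    · intro i hi
      obtain ⟨h0, hstep⟩ := hcond i (by omega)
      rw [hpre i hi] at h0 hstep
      rw [List.getD_append _ _ _ _ (by omega)] at hstep
      exact ⟨h0, hstep⟩
  · rintro ⟨L', s, m', rfl, hs, hm, hlen, hsum, hcond⟩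
    refine ⟨by simp [hlen], by simp [hsum, ← hm], ?_⟩
    intro i hi
    rcases Nat.lt_or_ge i n with hi' | hi'
    · have ht : (L' ++ [(s,0)]).take (i+1) = L'.take (i+1) :=
        List.take_append_of_le_length (by omega)
      obtain ⟨h0, hstep⟩ := hcond i hi'
      rw [ht, List.getD_append _ _ _ _ (by omega)]
      exact ⟨h0, hstep⟩
    · have hi'' : i = n := by omega
      have ht : (L' ++ [(s,0)]).take (i+1) = L' ++ [(s,0)] :=
        List.take_of_length_le (by simp [hlen]; omega)
      have hg : (L' ++ [(s,0)]).getD i (0,0) = (s,0) := by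
        rw [List.getD_append_right _ _ _ _ (by omega)]
        simp [hlen, hi'']
      rw [ht, hg]
      constructor
      · have : ((L' ++ [(s,0)]).map Prod.fst).sum = (m : ℤ) := by simp [hsum, ← hm]
        rw [this]
        exact Int.ofNat_nonneg m
      · exact (stepOK_iff _ _ _).mpr ⟨rfl, hs⟩


def app (s : ℤ) : List (ℤ × ℕ) → List (ℤ × ℕ) := fun L => L ++ [(s, 0)]

lemma app_inj (s : ℤ) : Function.Injective (app s) := by
  intro a b h
  have hl : a.length = b.length := by
    have := congrArg List.length h
    simpa [app] using this
  exact (List.append_inj h hl).1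

lemma app_disj {s t : ℤ} (hst : s ≠ t) (A B : Set (List (ℤ × ℕ))) :
    Disjoint (app s '' A) (app t '' B) := by
  rw [Set.disjoint_left]
  rintro x ⟨L, -, rfl⟩ ⟨L', -, heq⟩
  have hl : L'.length = L.length := by
    have := congrArg List.length heq
    simpa [app] using this
  obtain ⟨-, h2⟩ := List.append_inj heq hl
  simp only [List.cons.injEq, Prod.mk.injEq] at h2
  exact hst h2.1.1.symm

lemma S1_zero (m : ℕ) : S1 0 m = if m = 0 then {[]} else ∅ := by
  ext L
  constructor
  · rintro ⟨hlen, hsum, -⟩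
    have : L = [] := List.length_eq_zero_iff.mp hlen
    subst this
    simp at hsum
    have hm : m = 0 := by exact_mod_cast hsum.symm
    simp [hm]
  · intro hL
    split at hL
    · rename_i hm
      subst hm
      rw [Set.mem_singleton_iff] at hL
      subst hL
      exact ⟨rfl, by simp, by omega⟩
    · exact absurd hL (Set.notMem_empty L)

lemma S1_succ_zero (n : ℕ) :
    S1 (n + 1) 0 = app 0 '' S1 n 0 ∪ app (-1) '' S1 n 1 := by
  ext L
  rw [mem_S1_succ]
  constructor
  · rintro ⟨L', s, m', rfl, (rfl | rfl | rfl), hm, hmem⟩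
    · exfalso; omega
    · left; exact ⟨L', by rwa [show m' = 0 by omega] at hmem, rfl⟩
    · right; exact ⟨L', by rwa [show m' = 1 by omega] at hmem, rfl⟩
  · rintro (⟨L', hL', rfl⟩ | ⟨L', hL', rfl⟩)
    · exact ⟨L', 0, 0, rfl, Or.inr (Or.inl rfl), by norm_num, hL'⟩
    · exact ⟨L', -1, 1, rfl, Or.inr (Or.inr rfl), by norm_num, hL'⟩

lemma S1_succ_pos (n m : ℕ) :
    S1 (n + 1) (m + 1) =
      (app 0 '' S1 n (m + 1) ∪ app (-1) '' S1 n (m + 2)) ∪ app 1 '' S1 n m := by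
  ext L
  rw [mem_S1_succ]
  constructor
  · rintro ⟨L', s, m', rfl, (rfl | rfl | rfl), hm, hmem⟩
    · right; exact ⟨L', by rwa [show m' = m by omega] at hmem, rfl⟩
    · left; left; exact ⟨L', by rwa [show m' = m + 1 by omega] at hmem, rfl⟩
    · left; right; exact ⟨L', by rwa [show m' = m + 2 by omega] at hmem, rfl⟩
  · rintro ((⟨L', hL', rfl⟩ | ⟨L', hL', rfl⟩) | ⟨L', hL', rfl⟩)
    · exact ⟨L', 0, m + 1, rfl, Or.inr (Or.inl rfl), by push_cast; ring, hL'⟩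
    · exact ⟨L', -1, m + 2, rfl, Or.inr (Or.inr rfl), by push_cast; ring, hL'⟩
    · exact ⟨L', 1, m, rfl, Or.inl rfl, by push_cast; ring, hL'⟩

lemma S1_finite : ∀ n m, (S1 n m).Finite := by
  intro n
  induction n with
  | zero =>
    intro m
    rw [S1_zero]
    split
    · exact Set.finite_singleton _
    · exact Set.finite_empty
  | succ n ih =>
    intro m
    cases m with
    | zero =>
      rw [S1_succ_zero]
      exact ((ih 0).image _).union ((ih 1).image _)
    | succ m =>
      rw [S1_succ_pos]
      exact (((ih (m+1)).image _).union ((ih (m+2)).image _)).union ((ih m).image _)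

lemma M_zero (m : ℕ) :
    M 1 (fun _ => 1) (fun _ => 1) 0 m = if m = 0 then 1 else 0 := by
  rw [M, Nat.card_coe_set_eq]
  show (S1 0 m).ncard = _
  rw [S1_zero]
  split
  · exact Set.ncard_singleton _
  · exact Set.ncard_empty _

lemma M_succ (n m : ℕ) :
    M 1 (fun _ => 1) (fun _ => 1) (n + 1) m =
      M 1 (fun _ => 1) (fun _ => 1) n (m + 1) + M 1 (fun _ => 1) (fun _ => 1) n m +
        (if m = 0 then 0 else M 1 (fun _ => 1) (fun _ => 1) n (m - 1)) := by
  simp only [M, Nat.card_coe_set_eq]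
  cases m with
  | zero =>
    show (S1 (n+1) 0).ncard = (S1 n 1).ncard + (S1 n 0).ncard + _
    rw [S1_succ_zero, Set.ncard_union_eq (app_disj (by norm_num) _ _)
        ((S1_finite n 0).image _) ((S1_finite n 1).image _),
      Set.ncard_image_of_injective _ (app_inj 0),
      Set.ncard_image_of_injective _ (app_inj (-1))]
    simp [Nat.add_comm]
  | succ m =>
    show (S1 (n+1) (m+1)).ncard =
      (S1 n (m+2)).ncard + (S1 n (m+1)).ncard + (if m + 1 = 0 then 0 else (S1 n m).ncard)
    rw [S1_succ_pos,
      Set.ncard_union_eq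
        (Set.disjoint_union_left.mpr ⟨app_disj (by norm_num) _ _, app_disj (by norm_num) _ _⟩)
        (((S1_finite n (m+1)).image _).union ((S1_finite n (m+2)).image _))
        ((S1_finite n m).image _),
      Set.ncard_union_eq (app_disj (by norm_num) _ _)
        ((S1_finite n (m+1)).image _) ((S1_finite n (m+2)).image _),
      Set.ncard_image_of_injective _ (app_inj 0),
      Set.ncard_image_of_injective _ (app_inj (-1)),
      Set.ncard_image_of_injective _ (app_inj 1)]
    simp [Nat.add_comm]

/-- Binomial transform of the Motzkin triangle, as an integer. -/
noncomputable def G (n m : ℕ) : ℤ :=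
  ∑ i ∈ Finset.range (n + 1), (n.choose i : ℤ) * (M 1 (fun _ => 1) (fun _ => 1) i m : ℤ)

lemma G_zero (m : ℕ) : G 0 m = if m = 0 then 1 else 0 := by
  simp [G, M_zero]

lemma G_succ (n m : ℕ) :
    G (n + 1) m = 2 * G n m + G n (m + 1) + (if m = 0 then 0 else G n (m - 1)) := by
  have key : ∀ i, (M 1 (fun _ => 1) (fun _ => 1) (i + 1) m : ℤ) =
      (M 1 (fun _ => 1) (fun _ => 1) i (m + 1) : ℤ) + (M 1 (fun _ => 1) (fun _ => 1) i m : ℤ) +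
        (if m = 0 then 0 else (M 1 (fun _ => 1) (fun _ => 1) i (m - 1) : ℤ)) := by
    intro i
    rw [M_succ]
    push_cast
    split <;> simp
  rw [G, Finset.sum_range_succ']
  have hps : ∀ i, ((n + 1).choose (i + 1) : ℤ) = (n.choose i : ℤ) + (n.choose (i + 1) : ℤ) := by
    intro i; exact_mod_cast congrArg (Nat.cast (R := ℤ)) (Nat.choose_succ_succ n i)
  have e1 : (∑ i ∈ Finset.range (n + 1), ((n + 1).choose (i + 1) : ℤ) *
        (M 1 (fun _ => 1) (fun _ => 1) (i + 1) m : ℤ)) =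
      (∑ i ∈ Finset.range (n + 1), (n.choose i : ℤ) *
        (M 1 (fun _ => 1) (fun _ => 1) (i + 1) m : ℤ)) +
      (∑ i ∈ Finset.range (n + 1), (n.choose (i + 1) : ℤ) *
        (M 1 (fun _ => 1) (fun _ => 1) (i + 1) m : ℤ)) := by
    rw [← Finset.sum_add_distrib]
    exact Finset.sum_congr rfl (fun i _ => by rw [hps i, add_mul])
  have e2 : (∑ i ∈ Finset.range (n + 1), (n.choose (i + 1) : ℤ) *
        (M 1 (fun _ => 1) (fun _ => 1) (i + 1) m : ℤ)) +
      ((n + 1).choose 0 : ℤ) * (M 1 (fun _ => 1) (fun _ => 1) 0 m : ℤ) = G n m := by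
    rw [Finset.sum_range_succ, Nat.choose_succ_self]
    rw [G, Finset.sum_range_succ']
    simp
  have e3 : (∑ i ∈ Finset.range (n + 1), (n.choose i : ℤ) *
        (M 1 (fun _ => 1) (fun _ => 1) (i + 1) m : ℤ)) =
      G n m + G n (m + 1) + (if m = 0 then 0 else G n (m - 1)) := by
    simp only [key]
    by_cases hm : m = 0
    · simp only [hm, if_true, reduceIte, add_zero]
      rw [Finset.sum_congr rfl (fun i _ => by rw [mul_add]), Finset.sum_add_distrib]
      rw [G, G]
      ring
    · simp only [hm, if_false, reduceIte]
      rw [Finset.sum_congr rfl (fun i _ => by rw [mul_add, mul_add]),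
        Finset.sum_add_distrib, Finset.sum_add_distrib]
      rw [G, G, G]
      ring
  rw [e1, add_assoc, e2, e3]
  ring

/-- Ballot-number closed form. -/
def F (n m : ℕ) : ℤ :=
  ((2 * n + 1).choose (n + m + 1) : ℤ) - ((2 * n + 1).choose (n + m + 2) : ℤ)

lemma F_zero (m : ℕ) : F 0 m = if m = 0 then 1 else 0 := by
  cases m with
  | zero => simp [F]
  | succ m =>
    have h1 : (1).choose (m + 2) = 0 := Nat.choose_eq_zero_of_lt (by omega)
    have h2 : (1).choose (m + 3) = 0 := Nat.choose_eq_zero_of_lt (by omega)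
    simp [F, show 0 + (m + 1) + 1 = m + 2 by omega, show 0 + (m + 1) + 2 = m + 3 by omega,
      h1, h2]

lemma choose_cast_pascal (N j : ℕ) :
    ((N + 1).choose (j + 1) : ℤ) = (N.choose j : ℤ) + (N.choose (j + 1) : ℤ) := by
  exact_mod_cast congrArg (Nat.cast (R := ℤ)) (Nat.choose_succ_succ N j)

lemma F_succ (n m : ℕ) :
    F (n + 1) m = 2 * F n m + F n (m + 1) + (if m = 0 then 0 else F n (m - 1)) := by
  have pas2 : ∀ j, ((2 * n + 3).choose (j + 2) : ℤ) =
      ((2 * n + 1).choose j : ℤ) + 2 * ((2 * n + 1).choose (j + 1) : ℤ) +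
        ((2 * n + 1).choose (j + 2) : ℤ) := by
    intro j
    have h1 := choose_cast_pascal (2 * n + 2) (j + 1)
    have h2 := choose_cast_pascal (2 * n + 1) j
    have h3 := choose_cast_pascal (2 * n + 1) (j + 1)
    rw [show 2 * n + 2 + 1 = 2 * n + 3 by ring] at h1
    rw [show 2 * n + 1 + 1 = 2 * n + 2 by ring] at h2 h3
    rw [h1, h2, h3]; ring
  have hA : F (n + 1) m =
      ((2 * n + 1).choose (n + m) : ℤ) + ((2 * n + 1).choose (n + m + 1) : ℤ)
        - ((2 * n + 1).choose (n + m + 2) : ℤ) - ((2 * n + 1).choose (n + m + 3) : ℤ) := by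
    rw [F, show 2 * (n + 1) + 1 = 2 * n + 3 by ring,
      show n + 1 + m + 1 = (n + m) + 2 by ring, show n + 1 + m + 2 = (n + m + 1) + 2 by ring,
      pas2, pas2]
    ring
  by_cases hm : m = 0
  · subst hm
    have hsym : ((2 * n + 1).choose n : ℤ) = ((2 * n + 1).choose (n + 1) : ℤ) := by
      have := Nat.choose_symm (n := 2 * n + 1) (k := n + 1) (by omega)
      rw [show 2 * n + 1 - (n + 1) = n by omega] at this
      exact_mod_cast this
    simp only [if_true, reduceIte, add_zero]
    rw [hA, F, F]
    ring_nf
    ring_nf at hsym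
    rw [hsym]
    ring
  · obtain ⟨k, rfl⟩ : ∃ k, m = k + 1 := ⟨m - 1, by omega⟩
    simp only [reduceIte, Nat.add_sub_cancel, hm, if_false]
    rw [hA, F, F, F]
    ring_nf

lemma G_eq_F : ∀ n m, G n m = F n m := by
  intro n
  induction n with
  | zero => intro m; rw [G_zero, F_zero]
  | succ n ih =>
    intro m
    rw [G_succ, F_succ, ih, ih]
    by_cases hm : m = 0
    · simp [hm]
    · simp [hm, ih]

/-- The binomial transform of the Motzkin numbers is the shifted Catalan numbers. -/
theorem motzkin_binomial_transform_catalan (n : ℕ) :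
    (∑ i ∈ Finset.range (n + 1),
        n.choose i * M 1 (fun _ => 1) (fun _ => 1) i 0) = catalan (n + 1) := by
  have hZ : ((∑ i ∈ Finset.range (n + 1),
      n.choose i * M 1 (fun _ => 1) (fun _ => 1) i 0 : ℕ) : ℤ) = G n 0 := by
    rw [G]; push_cast; rfl
  have hsym : ((2 * n + 1).choose n : ℤ) = ((2 * n + 1).choose (n + 1) : ℤ) := by
    have := Nat.choose_symm (n := 2 * n + 1) (k := n + 1) (by omega)
    rw [show 2 * n + 1 - (n + 1) = n by omega] at this
    exact_mod_cast this
  have hcb : ((n : ℤ) + 2) * (catalan (n + 1) : ℤ) = ((n + 1).centralBinom : ℤ) := by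
    have := succ_mul_catalan_eq_centralBinom (n + 1)
    push_cast [← this]
    ring
  have h1 : ((2 * n + 1).choose (n + 2) : ℤ) * ((n : ℤ) + 2) =
      ((2 * n + 1).choose (n + 1) : ℤ) * (n : ℤ) := by
    have := Nat.choose_succ_right_eq (2 * n + 1) (n + 1)
    rw [show 2 * n + 1 - (n + 1) = n by omega] at this
    exact_mod_cast this
  have h2 : ((n + 1).centralBinom : ℤ) = 2 * ((2 * n + 1).choose (n + 1) : ℤ) := by
    rw [Nat.centralBinom]
    have : (2 * (n + 1)).choose (n + 1) = (2 * n + 1).choose n + (2 * n + 1).choose (n + 1) := by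
      rw [show 2 * (n + 1) = (2 * n + 1) + 1 by ring]
      exact Nat.choose_succ_succ (2 * n + 1) n
    rw [this]
    push_cast
    rw [hsym]
    ring
  have hdiff : ((n : ℤ) + 2) * F n 0 = ((n + 1).centralBinom : ℤ) := by
    rw [F]
    simp only [Nat.add_zero]
    rw [h2]
    linarith [h1]
  have hF : (catalan (n + 1) : ℤ) = F n 0 := by
    have h3 : ((n : ℤ) + 2) * (catalan (n + 1) : ℤ) = ((n : ℤ) + 2) * F n 0 := by
      rw [hcb, hdiff]
    exact mul_left_cancel₀ (by positivity) h3
  have : ((∑ i ∈ Finset.range (n + 1),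
      n.choose i * M 1 (fun _ => 1) (fun _ => 1) i 0 : ℕ) : ℤ) = (catalan (n + 1) : ℤ) := by
    rw [hZ, G_eq_F, hF]
  exact_mod_cast this
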